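/- arXiv:math/0604373 — 10 statements merged into one kernel-verified Lean document; each statement's English description precedes it below -/
import Mathlib

section
/- Let n be a natural number and let S, T be subspaces of ℂⁿ. Then P(S,T) := (S ⊔ Tᗮ) ⊓ T equals the range of the composition P_T ∘ P_S, where P_U denotes the orthogonal projection of ℂⁿ onto the subspace U (viewed as a linear endomorphism of ℂⁿ). -/
/-- `P(S,T) = (S ⊔ Tᗮ) ⊓ T` equals the range of `P_T ∘ P_S`, where `P_U` is the
orthogonal projection of `ℂⁿ` onto `U` viewed as a linear endomorphism of `ℂⁿ`. -/
theorem stmt_0 (n : ℕ) (S T : Submodule ℂ (EuclideanSpace ℂ (Fin n))) :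
    (S ⊔ Tᗮ) ⊓ T =
      LinearMap.range
        (((T.subtypeL.comp (T.orthogonalProjection)).comp
          (S.subtypeL.comp (S.orthogonalProjection)) :
            EuclideanSpace ℂ (Fin n) →L[ℂ] EuclideanSpace ℂ (Fin n)) :
          EuclideanSpace ℂ (Fin n) →ₗ[ℂ] EuclideanSpace ℂ (Fin n)) := by
  ext x
  simp only [Submodule.mem_inf, LinearMap.mem_range, ContinuousLinearMap.coe_coe,
    ContinuousLinearMap.comp_apply, Submodule.subtypeL_apply]
  constructor
  · rintro ⟨hx1, hxT⟩
    obtain ⟨s, hs, t, ht, rfl⟩ := Submodule.mem_sup.mp hx1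
    refine ⟨s, ?_⟩
    rw [show (S.orthogonalProjection s : EuclideanSpace ℂ (Fin n)) = s from
      S.starProjection_eq_self_iff.mpr hs]
    have : (T.orthogonalProjection s : EuclideanSpace ℂ (Fin n)) =
        (T.orthogonalProjection (s + t) : EuclideanSpace ℂ (Fin n)) := by
      rw [map_add, show T.orthogonalProjection t = 0 from
        T.orthogonalProjectionOnto_apply_of_mem_orthogonal ht]
      simp
    rw [this, show (T.orthogonalProjection (s + t) : EuclideanSpace ℂ (Fin n)) = s + t from
      T.starProjection_eq_self_iff.mpr hxT]
  · rintro ⟨y, rfl⟩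
    set u : EuclideanSpace ℂ (Fin n) := (S.orthogonalProjection y : EuclideanSpace ℂ (Fin n))
    refine ⟨?_, Submodule.coe_mem _⟩
    have h1 : u ∈ S := Submodule.coe_mem _
    have h2 : u - (T.orthogonalProjection u : EuclideanSpace ℂ (Fin n)) ∈ Tᗮ :=
      T.sub_starProjection_mem_orthogonal u
    have : (T.orthogonalProjection u : EuclideanSpace ℂ (Fin n)) =
        u + -(u - (T.orthogonalProjection u : EuclideanSpace ℂ (Fin n))) := by abel
    rw [this]
    exact Submodule.add_mem _ (Submodule.mem_sup_left h1)
      (Submodule.mem_sup_right (neg_mem h2))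
end

section
/- Let n be a natural number and let S, T be subspaces of ℂⁿ. Then dim P(S,T) = dim P(T,S), i.e., finrank ℂ ((S ⊔ Tᗮ) ⊓ T) = finrank ℂ ((T ⊔ Sᗮ) ⊓ S). -/
/-!
Both sides equal the rank of the orthogonal projection onto one subspace restricted to the
other. Concretely, since `(S ⊔ Tᗮ) ⊔ T` is the whole space, dimension counting gives
`dim P(S,T) = dim S - dim (S ⊓ Tᗮ)`, and `S ⊓ Tᗮ = (Sᗮ ⊔ T)ᗮ` turns this into the expression
`dim T - dim (T ⊓ Sᗮ)`, which is symmetric under `S ↔ T`.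
-/

open Module

namespace Submodule

variable {𝕜 E : Type*} [RCLike 𝕜] [NormedAddCommGroup E] [InnerProductSpace 𝕜 E]
  [FiniteDimensional 𝕜 E]

theorem finrank_sup_orthogonal_inf_add_finrank_inf_orthogonal (S T : Submodule 𝕜 E) :
    finrank 𝕜 ((S ⊔ Tᗮ) ⊓ T : Submodule 𝕜 E) + finrank 𝕜 (S ⊓ Tᗮ : Submodule 𝕜 E) =
      finrank 𝕜 S := by
  have hspan : (S ⊔ Tᗮ) ⊔ T = ⊤ := by
    rw [sup_assoc, sup_comm Tᗮ T, sup_orthogonal_of_hasOrthogonalProjection, sup_top_eq]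
  have hP := finrank_sup_add_finrank_inf_eq (S ⊔ Tᗮ) T
  rw [hspan, finrank_top] at hP
  have hST := finrank_sup_add_finrank_inf_eq S Tᗮ
  have hT := T.finrank_add_finrank_orthogonal
  omega

theorem finrank_add_finrank_inf_orthogonal_comm (S T : Submodule 𝕜 E) :
    finrank 𝕜 S + finrank 𝕜 (T ⊓ Sᗮ : Submodule 𝕜 E) =
      finrank 𝕜 T + finrank 𝕜 (S ⊓ Tᗮ : Submodule 𝕜 E) := by
  have hperp : S ⊓ Tᗮ = (Sᗮ ⊔ T)ᗮ := by
    rw [← inf_orthogonal, orthogonal_orthogonal]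
  have hST := (Sᗮ ⊔ T).finrank_add_finrank_orthogonal
  rw [← hperp] at hST
  have hsup := finrank_sup_add_finrank_inf_eq Sᗮ T
  rw [inf_comm] at hsup
  have hS := S.finrank_add_finrank_orthogonal
  omega

end Submodule

/-- `dim P(S,T) = dim P(T,S)` where `P(S,T) = (S ⊔ Tᗮ) ⊓ T`. -/
theorem stmt_1 (n : ℕ) (S T : Submodule ℂ (EuclideanSpace ℂ (Fin n))) :
    Module.finrank ℂ ((S ⊔ Tᗮ) ⊓ T : Submodule ℂ (EuclideanSpace ℂ (Fin n))) =
      Module.finrank ℂ ((T ⊔ Sᗮ) ⊓ S : Submodule ℂ (EuclideanSpace ℂ (Fin n))) := by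
  have hST := S.finrank_sup_orthogonal_inf_add_finrank_inf_orthogonal T
  have hTS := T.finrank_sup_orthogonal_inf_add_finrank_inf_orthogonal S
  have hcomm := S.finrank_add_finrank_inf_orthogonal_comm T
  omega
end

section
/- Let n be a natural number and let S, T be subspaces of ℂⁿ. Then P(S,T) ⊓ P(T,S) = S ⊓ T, i.e., ((S ⊔ Tᗮ) ⊓ T) ⊓ ((T ⊔ Sᗮ) ⊓ S) = S ⊓ T. -/
/-- `P(S,T) ⊓ P(T,S) = S ⊓ T` where `P(S,T) = (S ⊔ Tᗮ) ⊓ T`. -/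
theorem stmt_3 (n : ℕ) (S T : Submodule ℂ (EuclideanSpace ℂ (Fin n))) :
    ((S ⊔ Tᗮ) ⊓ T) ⊓ ((T ⊔ Sᗮ) ⊓ S) = S ⊓ T := by
  apply le_antisymm
  · exact le_inf (inf_le_right.trans inf_le_right) (inf_le_left.trans inf_le_right)
  · exact le_inf (le_inf (inf_le_left.trans le_sup_left) inf_le_right)
      (le_inf (inf_le_right.trans le_sup_left) inf_le_left)
end

section
/- Let n be a natural number and let S, T be subspaces of ℂⁿ. Then dim α(S,T) ≤ n − max(dim S, dim T), i.e., finrank ℂ (((T ⊔ Sᗮ) ⊓ S) ⊓ (S ⊓ T)ᗮ) ≤ n − max (finrank ℂ S) (finrank ℂ T). -/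
/-!
`(T ⊔ Sᗮ) ⊓ S` is the orthogonal projection of `T` onto `S`, so its dimension is at most
`min (dim S) (dim T)`. It contains `S ⊓ T`, and `α(S,T)` is a complement of `S ⊓ T` inside it, so
`dim α(S,T) ≤ min (dim S) (dim T) - dim (S ⊓ T) = dim (S ⊔ T) - max (dim S) (dim T)`.
-/

open Module Submodule

section LinearAlgebra

variable {K V : Type*} [DivisionRing K] [AddCommGroup V] [Module K V] [FiniteDimensional K V]

theorem Submodule.finrank_add_finrank_le_of_disjoint_of_le {s t u : Submodule K V}
    (hst : Disjoint s t) (hs : s ≤ u) (ht : t ≤ u) :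
    finrank K s + finrank K t ≤ finrank K u := by
  rw [← finrank_sup_add_finrank_inf_eq, hst.eq_bot, finrank_bot, add_zero]
  exact finrank_mono (sup_le hs ht)

theorem Submodule.finrank_sup_inf_le_of_isCompl {U W : Submodule K V} (h : IsCompl U W)
    (T : Submodule K V) : finrank K ↥((T ⊔ U) ⊓ W) ≤ finrank K T := by
  have hsum := finrank_sup_add_finrank_inf_eq (T ⊔ U) W
  rw [sup_assoc, h.sup_eq_top, sup_top_eq, finrank_top] at hsum
  have hTU := finrank_add_le_finrank_add_finrank T U
  have hUW := finrank_add_eq_of_isCompl h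
  omega

end LinearAlgebra

section InnerProductSpace

variable {𝕜 E : Type*} [RCLike 𝕜] [NormedAddCommGroup E] [InnerProductSpace 𝕜 E]
  [FiniteDimensional 𝕜 E]

theorem Submodule.finrank_sup_orthogonal_inf_le (S T : Submodule 𝕜 E) :
    finrank 𝕜 ↥((T ⊔ Sᗮ) ⊓ S) ≤ finrank 𝕜 T :=
  finrank_sup_inf_le_of_isCompl S.isCompl_orthogonal.symm T

theorem Submodule.finrank_sup_orthogonal_inf_inf_orthogonal_le (S T : Submodule 𝕜 E) :
    finrank 𝕜 ↥((T ⊔ Sᗮ) ⊓ S ⊓ (S ⊓ T)ᗮ) ≤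
      finrank 𝕜 E - max (finrank 𝕜 S) (finrank 𝕜 T) := by
  set P := (T ⊔ Sᗮ) ⊓ S
  have hP : finrank 𝕜 ↥(P ⊓ (S ⊓ T)ᗮ) + finrank 𝕜 ↥(S ⊓ T) ≤ finrank 𝕜 P :=
    finrank_add_finrank_le_of_disjoint_of_le
      ((S ⊓ T).orthogonal_disjoint.symm.mono_left inf_le_right) inf_le_left
      (le_inf (inf_le_right.trans le_sup_left) inf_le_left)
  have hPS : finrank 𝕜 P ≤ finrank 𝕜 S := finrank_mono inf_le_right
  have hPT : finrank 𝕜 P ≤ finrank 𝕜 T := finrank_sup_orthogonal_inf_le S T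
  have hST := finrank_sup_add_finrank_inf_eq S T
  have hE := (S ⊔ T).finrank_le
  omega

end InnerProductSpace

/-- `dim α(S,T) ≤ n − max (dim S) (dim T)` where `α(S,T) = ((T ⊔ Sᗮ) ⊓ S) ⊓ (S ⊓ T)ᗮ`. -/
theorem stmt_5 (n : ℕ) (S T : Submodule ℂ (EuclideanSpace ℂ (Fin n))) :
    Module.finrank ℂ
        ((((T ⊔ Sᗮ) ⊓ S) ⊓ (S ⊓ T)ᗮ) : Submodule ℂ (EuclideanSpace ℂ (Fin n))) ≤
      n - max (Module.finrank ℂ S) (Module.finrank ℂ T) := by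
  simpa only [finrank_euclideanSpace_fin] using finrank_sup_orthogonal_inf_inf_orthogonal_le S T
end

section
/- Let n be a natural number and let S, T be subspaces of ℂⁿ. Then dim α(S,T) ≤ ⌊n/2⌋, i.e., finrank ℂ (((T ⊔ Sᗮ) ⊓ S) ⊓ (S ⊓ T)ᗮ) ≤ n / 2 (natural number division). -/
/-!
Write `A = ((T ⊔ Sᗮ) ⊓ S) ⊓ (S ⊓ T)ᗮ`. The space `(T ⊔ Sᗮ) ⊓ S` is the orthogonal projection
of `T` onto `S`, so it has dimension at most `dim T`; it contains both `A` and `S ⊓ T`, which are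
orthogonal. Hence `dim A + dim (S ⊓ T)` is bounded by `dim T`, and also by `dim S`. Adding the two
bounds and using `dim S + dim T = dim (S ⊔ T) + dim (S ⊓ T) ≤ n + dim (S ⊓ T)` gives
`2 dim A ≤ n`.
-/

open Module

namespace Submodule

variable {K V : Type*} [DivisionRing K] [AddCommGroup V] [Module K V] [FiniteDimensional K V]

theorem finrank_add_finrank_le_of_disjoint_of_sup_le {A B C : Submodule K V} (h : Disjoint A B)
    (hle : A ⊔ B ≤ C) : finrank K A + finrank K B ≤ finrank K C := by
  rw [← finrank_sup_add_finrank_inf_eq, h.eq_bot, finrank_bot, add_zero]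
  exact finrank_mono hle

theorem finrank_sup_inf_le_of_disjoint {S U : Submodule K V} (T : Submodule K V)
    (h : Disjoint U S) : finrank K ↥((T ⊔ U) ⊓ S) ≤ finrank K T := by
  have hsup := finrank_sup_add_finrank_inf_eq (T ⊔ U) S
  have hTU := finrank_add_le_finrank_add_finrank T U
  have hUS : finrank K U + finrank K S ≤ finrank K ↥(T ⊔ U ⊔ S) :=
    finrank_add_finrank_le_of_disjoint_of_sup_le h (sup_le_sup_right le_sup_right S)
  omega

end Submodule

section InnerProductSpace

open Submodule

variable {𝕜 E : Type*} [RCLike 𝕜] [NormedAddCommGroup E] [InnerProductSpace 𝕜 E]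
  [FiniteDimensional 𝕜 E] (S T : Submodule 𝕜 E)

theorem finrank_inf_orthogonal_inf_add_finrank_inf_le_right :
    finrank 𝕜 ↥(((T ⊔ Sᗮ) ⊓ S) ⊓ (S ⊓ T)ᗮ) + finrank 𝕜 ↥(S ⊓ T) ≤ finrank 𝕜 T :=
  calc _ ≤ finrank 𝕜 ↥((T ⊔ Sᗮ) ⊓ S) :=
        finrank_add_finrank_le_of_disjoint_of_sup_le
          ((orthogonal_disjoint (S ⊓ T)).symm.mono_left inf_le_right)
          (sup_le inf_le_left (le_inf (inf_le_right.trans le_sup_left) inf_le_left))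
    _ ≤ finrank 𝕜 T := finrank_sup_inf_le_of_disjoint T (orthogonal_disjoint S).symm

theorem finrank_inf_orthogonal_inf_add_finrank_inf_le_left :
    finrank 𝕜 ↥(((T ⊔ Sᗮ) ⊓ S) ⊓ (S ⊓ T)ᗮ) + finrank 𝕜 ↥(S ⊓ T) ≤ finrank 𝕜 S :=
  finrank_add_finrank_le_of_disjoint_of_sup_le
    ((orthogonal_disjoint (S ⊓ T)).symm.mono_left inf_le_right)
    (sup_le (inf_le_left.trans inf_le_right) inf_le_left)

theorem two_mul_finrank_inf_orthogonal_inf_add_finrank_inf_le :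
    2 * finrank 𝕜 ↥(((T ⊔ Sᗮ) ⊓ S) ⊓ (S ⊓ T)ᗮ) + finrank 𝕜 ↥(S ⊓ T) ≤ finrank 𝕜 E := by
  have hS := finrank_inf_orthogonal_inf_add_finrank_inf_le_left S T
  have hT := finrank_inf_orthogonal_inf_add_finrank_inf_le_right S T
  have hST := finrank_sup_add_finrank_inf_eq S T
  have hE := finrank_le (S ⊔ T)
  omega

end InnerProductSpace

/-- `dim α(S,T) ≤ ⌊n/2⌋` where `α(S,T) = ((T ⊔ Sᗮ) ⊓ S) ⊓ (S ⊓ T)ᗮ`. -/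
theorem stmt_6 (n : ℕ) (S T : Submodule ℂ (EuclideanSpace ℂ (Fin n))) :
    Module.finrank ℂ
        ((((T ⊔ Sᗮ) ⊓ S) ⊓ (S ⊓ T)ᗮ) : Submodule ℂ (EuclideanSpace ℂ (Fin n))) ≤
      n / 2 := by
  have h := two_mul_finrank_inf_orthogonal_inf_add_finrank_inf_le S T
  rw [finrank_euclideanSpace_fin] at h
  omega
end

section
/- For every natural number n there exist subspaces S, T of ℂⁿ such that dim α(S,T) = ⌊n/2⌋, i.e., finrank ℂ (((T ⊔ Sᗮ) ⊓ S) ⊓ (S ⊓ T)ᗮ) = n / 2 (natural number division). -/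
/-!
Take `S` of dimension `⌊n/2⌋`; then `dim S ≤ dim Sᗮ`, so there is an injective `f : S → Sᗮ`, and
its graph `T = {x + f x | x ∈ S}` satisfies `T ⊔ Sᗮ = ⊤` and `S ⊓ T = ⊥`. Hence
`α(S,T) = (⊤ ⊓ S) ⊓ ⊥ᗮ = S`.
-/

open Module

namespace Submodule

variable {𝕜 E : Type*} [RCLike 𝕜] [NormedAddCommGroup E] [InnerProductSpace 𝕜 E]

def orthogonalGraph (S : Submodule 𝕜 E) (f : S →ₗ[𝕜] Sᗮ) : Submodule 𝕜 E :=
  LinearMap.range (S.subtype + Sᗮ.subtype ∘ₗ f)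

variable {S : Submodule 𝕜 E} (f : S →ₗ[𝕜] Sᗮ)

lemma add_mem_orthogonalGraph (x : S) : (x : E) + f x ∈ S.orthogonalGraph f :=
  ⟨x, rfl⟩

lemma orthogonalGraph_sup_orthogonal [S.HasOrthogonalProjection] :
    S.orthogonalGraph f ⊔ Sᗮ = ⊤ := by
  have hS : S ≤ S.orthogonalGraph f ⊔ Sᗮ := fun x hx => by
    simpa using sub_mem (mem_sup_left (add_mem_orthogonalGraph f ⟨x, hx⟩))
      (mem_sup_right (f ⟨x, hx⟩).2)
  rw [eq_top_iff, ← S.sup_orthogonal_of_hasOrthogonalProjection]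
  exact sup_le hS le_sup_right

lemma inf_orthogonalGraph_eq_bot {f : S →ₗ[𝕜] Sᗮ} (hf : Function.Injective f) :
    S ⊓ S.orthogonalGraph f = ⊥ := by
  rw [eq_bot_iff]
  rintro _ ⟨hS, x, rfl⟩
  -- `f x = (x + f x) - x` lies in both `S` and `Sᗮ`
  have hfx : (f x : E) ∈ S := by simpa using sub_mem hS x.2
  have : f x = 0 := Subtype.ext (inner_self_eq_zero.mp ((f x).2 _ hfx))
  simp [hf (this.trans (map_zero f).symm)]

lemma exists_sup_orthogonal_eq_top_and_inf_eq_bot [FiniteDimensional 𝕜 E] (S : Submodule 𝕜 E)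
    (h : finrank 𝕜 S ≤ finrank 𝕜 Sᗮ) : ∃ T : Submodule 𝕜 E, T ⊔ Sᗮ = ⊤ ∧ S ⊓ T = ⊥ := by
  obtain ⟨f, hf⟩ := finrank_le_iff_exists_linearMap.mp h
  exact ⟨S.orthogonalGraph f, orthogonalGraph_sup_orthogonal f, inf_orthogonalGraph_eq_bot hf⟩

lemma exists_finrank_eq {K V : Type*} [DivisionRing K] [AddCommGroup V] [Module K V]
    {k : ℕ} (hk : k ≤ finrank K V) : ∃ S : Submodule K V, finrank K S = k := by
  obtain ⟨v, hv⟩ := exists_linearIndependent_of_le_finrank hk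
  exact ⟨span K (Set.range v), by rw [finrank_span_eq_card hv, Fintype.card_fin]⟩

end Submodule

/-- For every `n` there are subspaces `S, T` of `ℂⁿ` with `dim α(S,T) = ⌊n/2⌋`,
where `α(S,T) = ((T ⊔ Sᗮ) ⊓ S) ⊓ (S ⊓ T)ᗮ`. -/
theorem stmt_7 (n : ℕ) :
    ∃ S T : Submodule ℂ (EuclideanSpace ℂ (Fin n)),
      Module.finrank ℂ
          ((((T ⊔ Sᗮ) ⊓ S) ⊓ (S ⊓ T)ᗮ) : Submodule ℂ (EuclideanSpace ℂ (Fin n))) =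
        n / 2 := by
  obtain ⟨S, hS⟩ := Submodule.exists_finrank_eq (K := ℂ) (V := EuclideanSpace ℂ (Fin n))
    (k := n / 2) (by simp only [finrank_euclideanSpace_fin]; omega)
  have hle : finrank ℂ S ≤ finrank ℂ Sᗮ := by
    have := S.finrank_add_finrank_orthogonal
    rw [finrank_euclideanSpace_fin] at this
    omega
  obtain ⟨T, hsup, hinf⟩ := S.exists_sup_orthogonal_eq_top_and_inf_eq_bot hle
  refine ⟨S, T, ?_⟩
  rw [hsup, hinf, Submodule.bot_orthogonal_eq_top, top_inf_eq, inf_top_eq, hS]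
end

section
/- Let k be a natural number, let n = 2k, and let S, T be subspaces of ℂⁿ such that dim S = k, dim T = k, S ⊓ T = ⊥, and S ⊓ Tᗮ = ⊥. Then dim α(S,T) = k, where α(S,T) = ((T ⊔ Sᗮ) ⊓ S) ⊓ (S ⊓ T)ᗮ. -/
/-- If `n = 2k`, `dim S = dim T = k`, `S ⊓ T = ⊥` and `S ⊓ Tᗮ = ⊥`, then
`dim α(S,T) = k`, where `α(S,T) = ((T ⊔ Sᗮ) ⊓ S) ⊓ (S ⊓ T)ᗮ`. -/
theorem stmt_9 (k : ℕ) (S T : Submodule ℂ (EuclideanSpace ℂ (Fin (2 * k))))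
    (hS : Module.finrank ℂ S = k) (hT : Module.finrank ℂ T = k)
    (hST : S ⊓ T = ⊥) (hST' : S ⊓ Tᗮ = ⊥) :
    Module.finrank ℂ
        ((((T ⊔ Sᗮ) ⊓ S) ⊓ (S ⊓ T)ᗮ) : Submodule ℂ (EuclideanSpace ℂ (Fin (2 * k)))) =
      k := by
  have h2 : (T ⊔ Sᗮ)ᗮ = ⊥ := by
    rw [← Submodule.inf_orthogonal, Submodule.orthogonal_orthogonal, inf_comm, hST']
  have h1 : T ⊔ Sᗮ = ⊤ := by
    have := congrArg Submodule.orthogonal h2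
    rwa [Submodule.orthogonal_orthogonal, Submodule.bot_orthogonal_eq_top] at this
  rw [h1, hST, Submodule.bot_orthogonal_eq_top, top_inf_eq, inf_top_eq, hS]
end

section
/- Let n be a natural number and let S, T be subspaces of ℂⁿ such that 2 · dim α(S,T) = n, where α(S,T) = ((T ⊔ Sᗮ) ⊓ S) ⊓ (S ⊓ T)ᗮ. Then α(S,T) = P(T,S), i.e., ((T ⊔ Sᗮ) ⊓ S) ⊓ (S ⊓ T)ᗮ = (T ⊔ Sᗮ) ⊓ S. -/
/-!
Put `K = S ⊓ T`, `P = (T ⊔ Sᗮ) ⊓ S` and `A = P ⊓ Kᗮ`. Since `K ≤ P ≤ S` and `P` is the orthogonal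
projection of `T` onto `S`, we get `dim A + dim K = dim P ≤ min (dim S) (dim T)`, hence
`2 (dim A + dim K) ≤ dim S + dim T = dim (S ⊔ T) + dim K ≤ n + dim K`.
With `2 dim A = n` this forces `K = ⊥`, and then `A = P`.
-/

open Module

namespace Submodule

variable {𝕜 E : Type*} [RCLike 𝕜] [NormedAddCommGroup E] [InnerProductSpace 𝕜 E]
  [FiniteDimensional 𝕜 E]

theorem finrank_sup_orthogonal_inf_le_s10 (S T : Submodule 𝕜 E) :
    finrank 𝕜 ((T ⊔ Sᗮ) ⊓ S : Submodule 𝕜 E) ≤ finrank 𝕜 T := by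
  have hsup : T ⊔ Sᗮ ⊔ S = ⊤ := by
    rw [sup_assoc, sup_comm Sᗮ S, sup_orthogonal_of_hasOrthogonalProjection, sup_top_eq]
  have hP := finrank_sup_add_finrank_inf_eq (T ⊔ Sᗮ) S
  have hTS := finrank_sup_add_finrank_inf_eq T Sᗮ
  rw [hsup, finrank_top] at hP
  have := finrank_add_finrank_orthogonal S
  omega

theorem inf_eq_bot_of_two_mul_finrank_eq {S T : Submodule 𝕜 E}
    (h : 2 * finrank 𝕜 ((T ⊔ Sᗮ) ⊓ S ⊓ (S ⊓ T)ᗮ : Submodule 𝕜 E) = finrank 𝕜 E) :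
    S ⊓ T = ⊥ := by
  set K := S ⊓ T
  set P := (T ⊔ Sᗮ) ⊓ S
  have hKP : K ≤ P := le_inf (inf_le_right.trans le_sup_left) inf_le_left
  have hAP : finrank 𝕜 K + finrank 𝕜 (Kᗮ ⊓ P : Submodule 𝕜 E) = finrank 𝕜 P :=
    finrank_add_inf_finrank_orthogonal hKP
  have hPT : finrank 𝕜 P ≤ finrank 𝕜 T := finrank_sup_orthogonal_inf_le_s10 S T
  have hPS : finrank 𝕜 P ≤ finrank 𝕜 S := finrank_mono inf_le_right
  have hST : finrank 𝕜 (S ⊔ T : Submodule 𝕜 E) + finrank 𝕜 K = finrank 𝕜 S + finrank 𝕜 T :=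
    finrank_sup_add_finrank_inf_eq S T
  have hSTE : finrank 𝕜 (S ⊔ T : Submodule 𝕜 E) ≤ finrank 𝕜 E := finrank_le _
  rw [inf_comm] at h
  exact finrank_eq_zero.mp (by omega)

end Submodule

/-- If `2 · dim α(S,T) = n`, then `α(S,T) = P(T,S)`, i.e.
`((T ⊔ Sᗮ) ⊓ S) ⊓ (S ⊓ T)ᗮ = (T ⊔ Sᗮ) ⊓ S`. -/
theorem stmt_10 (n : ℕ) (S T : Submodule ℂ (EuclideanSpace ℂ (Fin n)))
    (h : 2 * Module.finrank ℂ
        ((((T ⊔ Sᗮ) ⊓ S) ⊓ (S ⊓ T)ᗮ) : Submodule ℂ (EuclideanSpace ℂ (Fin n))) = n) :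
    ((T ⊔ Sᗮ) ⊓ S) ⊓ (S ⊓ T)ᗮ = (T ⊔ Sᗮ) ⊓ S := by
  have hST : S ⊓ T = ⊥ :=
    Submodule.inf_eq_bot_of_two_mul_finrank_eq (h.trans finrank_euclideanSpace_fin.symm)
  rw [hST, Submodule.bot_orthogonal_eq_top, inf_top_eq]
end

section
/- Let l be a natural number and let S, T, W be subspaces of ℂ^{2l} with dim W ≤ 1. Then dim( ((P(T,S) ⊔ P(S,T))ᗮ ⊓ W) ⊔ α(S,T) ) ≤ l, where P(S,T) = (S ⊔ Tᗮ) ⊓ T and α(S,T) = P(T,S) ⊓ (S ⊓ T)ᗮ. -/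
/-!
Write `P(S,T)` for the orthogonal projection of `S` onto `T`. Its dimension is `dim T - dim(Sᗮ ⊓ T)`,
and a dimension count shows that this is symmetric in `S` and `T` (the rank of `P_T P_S` equals that
of its adjoint). Put `p = dim P(S,T) = dim P(T,S)` and `k = dim(S ⊓ T)`. Since `S ⊓ T` lies in both
projections and contains their intersection, `dim α(S,T) = p - k` and `dim(P(T,S) ⊔ P(S,T)) ≥ 2p - k`.
So the space in question has dimension at most `1 + (p - k)` and at most `(n - (2p - k)) + (p - k)`,
where `n` is the ambient dimension; adding the two bounds gives twice the dimension `≤ n + 1`.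
-/

open Module Submodule

variable {𝕜 E : Type*} [RCLike 𝕜] [NormedAddCommGroup E] [InnerProductSpace 𝕜 E]

/-- `P(S,T)` of the paper: the orthogonal projection of `S` onto `T`. -/
def projOnto (S T : Submodule 𝕜 E) : Submodule 𝕜 E := (S ⊔ Tᗮ) ⊓ T

theorem inf_le_projOnto (S T : Submodule 𝕜 E) : S ⊓ T ≤ projOnto S T :=
  le_inf (inf_le_left.trans le_sup_left) inf_le_right

variable [FiniteDimensional 𝕜 E]

theorem orthogonal_orthogonal_inf (S T : Submodule 𝕜 E) : (Sᗮ ⊓ T)ᗮ = S ⊔ Tᗮ := by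
  rw [← orthogonal_orthogonal T, inf_orthogonal, orthogonal_orthogonal, orthogonal_orthogonal]

theorem finrank_projOnto_add_finrank_orthogonal_inf (S T : Submodule 𝕜 E) :
    finrank 𝕜 (projOnto S T) + finrank 𝕜 (Sᗮ ⊓ T : Submodule 𝕜 E) = finrank 𝕜 T := by
  rw [projOnto, ← orthogonal_orthogonal_inf, add_comm]
  exact finrank_add_inf_finrank_orthogonal inf_le_right

theorem finrank_add_finrank_orthogonal_inf_comm (S T : Submodule 𝕜 E) :
    finrank 𝕜 S + finrank 𝕜 (Sᗮ ⊓ T : Submodule 𝕜 E) =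
      finrank 𝕜 T + finrank 𝕜 (Tᗮ ⊓ S : Submodule 𝕜 E) := by
  have hsup := finrank_sup_add_finrank_inf_eq S Tᗮ
  have hcompl := finrank_add_finrank_orthogonal (Sᗮ ⊓ T)
  have hT := finrank_add_finrank_orthogonal T
  rw [orthogonal_orthogonal_inf] at hcompl
  rw [inf_comm Tᗮ]
  omega

theorem finrank_projOnto_comm (S T : Submodule 𝕜 E) :
    finrank 𝕜 (projOnto S T) = finrank 𝕜 (projOnto T S) := by
  have hST := finrank_projOnto_add_finrank_orthogonal_inf S T
  have hTS := finrank_projOnto_add_finrank_orthogonal_inf T S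
  have := finrank_add_finrank_orthogonal_inf_comm S T
  omega

theorem finrank_projOnto_inf_orthogonal_add_finrank_inf (S T : Submodule 𝕜 E) :
    finrank 𝕜 (projOnto T S ⊓ (S ⊓ T)ᗮ : Submodule 𝕜 E) + finrank 𝕜 (S ⊓ T : Submodule 𝕜 E) =
      finrank 𝕜 (projOnto T S) := by
  rw [inf_comm, add_comm]
  exact finrank_add_inf_finrank_orthogonal (inf_comm S T ▸ inf_le_projOnto T S)

theorem finrank_projOnto_add_finrank_projOnto_le (S T : Submodule 𝕜 E) :
    finrank 𝕜 (projOnto T S) + finrank 𝕜 (projOnto S T) ≤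
      finrank 𝕜 (projOnto T S ⊔ projOnto S T : Submodule 𝕜 E) +
        finrank 𝕜 (S ⊓ T : Submodule 𝕜 E) := by
  rw [← finrank_sup_add_finrank_inf_eq]
  exact Nat.add_le_add_left (finrank_mono
    (le_inf (inf_le_left.trans inf_le_right) (inf_le_right.trans inf_le_right))) _

theorem two_mul_finrank_le_finrank_add_one (S T W : Submodule 𝕜 E) (hW : finrank 𝕜 W ≤ 1) :
    2 * finrank 𝕜 ((projOnto T S ⊔ projOnto S T)ᗮ ⊓ W ⊔ projOnto T S ⊓ (S ⊓ T)ᗮ :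
        Submodule 𝕜 E) ≤ finrank 𝕜 E + 1 := by
  have hα := finrank_projOnto_inf_orthogonal_add_finrank_inf S T
  have hP := finrank_projOnto_add_finrank_projOnto_le S T
  have hcomm := finrank_projOnto_comm S T
  set Q := projOnto T S ⊔ projOnto S T
  set α := projOnto T S ⊓ (S ⊓ T)ᗮ
  have hsup := finrank_add_le_finrank_add_finrank (Qᗮ ⊓ W) α
  have hW' : finrank 𝕜 (Qᗮ ⊓ W : Submodule 𝕜 E) ≤ finrank 𝕜 W := finrank_mono inf_le_right
  have hQ : finrank 𝕜 (Qᗮ ⊓ W : Submodule 𝕜 E) ≤ finrank 𝕜 Qᗮ := finrank_mono inf_le_left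
  have hQQ := finrank_add_finrank_orthogonal Q
  omega

/-- For subspaces `S, T, W` of `ℂ^{2l}` with `dim W ≤ 1`,
`dim(((P(T,S) ⊔ P(S,T))ᗮ ⊓ W) ⊔ α(S,T)) ≤ l`, where `P(S,T) = (S ⊔ Tᗮ) ⊓ T`
and `α(S,T) = P(T,S) ⊓ (S ⊓ T)ᗮ`. -/
theorem stmt_11 (l : ℕ) (S T W : Submodule ℂ (EuclideanSpace ℂ (Fin (2 * l))))
    (hW : Module.finrank ℂ W ≤ 1) :
    Module.finrank ℂ
        (((((T ⊔ Sᗮ) ⊓ S) ⊔ ((S ⊔ Tᗮ) ⊓ T))ᗮ ⊓ W) ⊔ (((T ⊔ Sᗮ) ⊓ S) ⊓ (S ⊓ T)ᗮ) :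
          Submodule ℂ (EuclideanSpace ℂ (Fin (2 * l)))) ≤ l := by
  have h := two_mul_finrank_le_finrank_add_one S T W hW
  rw [finrank_euclideanSpace_fin] at h
  unfold projOnto at h
  omega
end

section
/- Let l be a natural number and let S, T, W be subspaces of ℂ^{2l+1} with dim W ≤ 1. Then dim( ((P(T,S) ⊔ P(S,T))ᗮ ⊓ W) ⊔ α(S,T) ) ≤ l + 1, where P(S,T) = (S ⊔ Tᗮ) ⊓ T and α(S,T) = P(T,S) ⊓ (S ⊓ T)ᗮ. -/
/-!
Write `α = α(S,T)`. Since `α ≤ S ⊓ (S ⊓ T)ᗮ`, it meets `T` trivially; since `α ≤ (T ⊔ Sᗮ) ⊓ S`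
and `S ⊓ Tᗮ ≤ (T ⊔ Sᗮ)ᗮ`, it also meets `Tᗮ` trivially. Hence `2 dim α ≤ dim T + dim Tᗮ = 2l + 1`,
so `dim α ≤ l`, and the other summand lies in `W`, of dimension at most `1`.
-/

namespace Submodule

variable {𝕜 E : Type*} [RCLike 𝕜] [NormedAddCommGroup E] [InnerProductSpace 𝕜 E]

lemma disjoint_inf_orthogonal_inf (S T : Submodule 𝕜 E) : Disjoint (S ⊓ (S ⊓ T)ᗮ) T := by
  rw [disjoint_iff, ← le_bot_iff]
  calc S ⊓ (S ⊓ T)ᗮ ⊓ T ≤ (S ⊓ T) ⊓ (S ⊓ T)ᗮ :=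
        le_inf (inf_le_inf_right _ inf_le_left) (inf_le_left.trans inf_le_right)
    _ = ⊥ := inf_orthogonal_eq_bot _

lemma disjoint_sup_orthogonal_inf_orthogonal (S T : Submodule 𝕜 E) :
    Disjoint ((T ⊔ Sᗮ) ⊓ S) Tᗮ := by
  have h : S ⊓ Tᗮ ≤ (T ⊔ Sᗮ)ᗮ := by
    rw [sup_comm, ← inf_orthogonal]
    exact inf_le_inf_right _ S.le_orthogonal_orthogonal
  rw [disjoint_iff, inf_assoc, ← le_bot_iff]
  calc (T ⊔ Sᗮ) ⊓ (S ⊓ Tᗮ) ≤ (T ⊔ Sᗮ) ⊓ (T ⊔ Sᗮ)ᗮ := inf_le_inf_left _ h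
    _ = ⊥ := inf_orthogonal_eq_bot _

lemma two_mul_finrank_le_of_disjoint_of_disjoint_orthogonal [FiniteDimensional 𝕜 E]
    {A T : Submodule 𝕜 E} (hT : Disjoint A T) (hTperp : Disjoint A Tᗮ) :
    2 * Module.finrank 𝕜 A ≤ Module.finrank 𝕜 E := by
  have h₁ := finrank_add_finrank_le_of_disjoint hT
  have h₂ := finrank_add_finrank_le_of_disjoint hTperp
  have h₃ := T.finrank_add_finrank_orthogonal
  omega

end Submodule

/-- For subspaces `S, T, W` of `ℂ^{2l+1}` with `dim W ≤ 1`,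
`dim(((P(T,S) ⊔ P(S,T))ᗮ ⊓ W) ⊔ α(S,T)) ≤ l + 1`, where `P(S,T) = (S ⊔ Tᗮ) ⊓ T`
and `α(S,T) = P(T,S) ⊓ (S ⊓ T)ᗮ`. -/
theorem stmt_12 (l : ℕ) (S T W : Submodule ℂ (EuclideanSpace ℂ (Fin (2 * l + 1))))
    (hW : Module.finrank ℂ W ≤ 1) :
    Module.finrank ℂ
        (((((T ⊔ Sᗮ) ⊓ S) ⊔ ((S ⊔ Tᗮ) ⊓ T))ᗮ ⊓ W) ⊔ (((T ⊔ Sᗮ) ⊓ S) ⊓ (S ⊓ T)ᗮ) :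
          Submodule ℂ (EuclideanSpace ℂ (Fin (2 * l + 1)))) ≤ l + 1 := by
  set α := ((T ⊔ Sᗮ) ⊓ S) ⊓ (S ⊓ T)ᗮ
  set X := (((T ⊔ Sᗮ) ⊓ S) ⊔ ((S ⊔ Tᗮ) ⊓ T))ᗮ ⊓ W
  have hαT : Disjoint α T :=
    (Submodule.disjoint_inf_orthogonal_inf S T).mono_left (inf_le_inf_right _ inf_le_right)
  have hαTperp : Disjoint α Tᗮ :=
    (Submodule.disjoint_sup_orthogonal_inf_orthogonal S T).mono_left inf_le_left
  have hα : 2 * Module.finrank ℂ α ≤ 2 * l + 1 := by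
    simpa using Submodule.two_mul_finrank_le_of_disjoint_of_disjoint_orthogonal hαT hαTperp
  have hX : Module.finrank ℂ X ≤ 1 := (Submodule.finrank_mono inf_le_right).trans hW
  have hsup := Submodule.finrank_add_le_finrank_add_finrank X α
  omega
end
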